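/- arXiv:math/0010198 — 3 statements merged into one kernel-verified Lean document; each statement's English description precedes it below -/
import Mathlib

section
/- Let ξ be an element of a commutative ring, H = (1/2)·diag(1,-1) and E = e₁₂ in M₂. Set F = I₄ + ξ (H ⊗ E) ∈ M₂ ⊗ M₂ (with entries in a ring containing 1/2). Then F is invertible with F⁻¹ = I₄ - ξ(H ⊗ E), and the matrix R = F₂₁ · F⁻¹, where F₂₁ = I₄ + ξ(E ⊗ H), satisfies the quantum Yang–Baxter equation R₁₂ R₁₃ R₂₃ = R₂₃ R₁₃ R₁₂. -/
open Kronecker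

/-- Embedding of a 4×4 matrix (indexed by `Fin 2 × Fin 2`) into the tensor cube,
acting on factors 1 and 2. -/
def emb12 {k : Type*} [Semiring k] (M : Matrix (Fin 2 × Fin 2) (Fin 2 × Fin 2) k) :
    Matrix (Fin 2 × Fin 2 × Fin 2) (Fin 2 × Fin 2 × Fin 2) k :=
  fun p q => M (p.1, p.2.1) (q.1, q.2.1) * (if p.2.2 = q.2.2 then 1 else 0)

/-- Embedding acting on factors 1 and 3. -/
def emb13 {k : Type*} [Semiring k] (M : Matrix (Fin 2 × Fin 2) (Fin 2 × Fin 2) k) :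
    Matrix (Fin 2 × Fin 2 × Fin 2) (Fin 2 × Fin 2 × Fin 2) k :=
  fun p q => M (p.1, p.2.2) (q.1, q.2.2) * (if p.2.1 = q.2.1 then 1 else 0)

/-- Embedding acting on factors 2 and 3. -/
def emb23 {k : Type*} [Semiring k] (M : Matrix (Fin 2 × Fin 2) (Fin 2 × Fin 2) k) :
    Matrix (Fin 2 × Fin 2 × Fin 2) (Fin 2 × Fin 2 × Fin 2) k :=
  fun p q => M (p.2.1, p.2.2) (q.2.1, q.2.2) * (if p.1 = q.1 then 1 else 0)

set_option maxHeartbeats 0 in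
/-- Any 4×4 matrix of the Jordanian form satisfies the quantum Yang–Baxter equation. -/
theorem jordanian_aux {R : Type*} [CommRing R] (a : R)
    (Rm : Matrix (Fin 2 × Fin 2) (Fin 2 × Fin 2) R)
    (hRm : ∀ p q, Rm p q =
      (if q = p then 1 else 0) +
      (if p = (0,0) then (if q = (0,1) then -a else 0) + (if q = (1,0) then a else 0)
        + (if q = (1,1) then a * a else 0) else 0) +
      (if p = (0,1) ∧ q = (1,1) then -a else 0) +
      (if p = (1,0) ∧ q = (1,1) then a else 0)) :
    emb12 Rm * emb13 Rm * emb23 Rm = emb23 Rm * emb13 Rm * emb12 Rm := by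
  have h2 : ∀ x : Fin 2, x = 0 ∨ x = 1 := by decide
  ext ⟨i, j, k⟩ ⟨l, m, n⟩
  rcases h2 i with rfl | rfl <;> rcases h2 j with rfl | rfl <;> rcases h2 k with rfl | rfl <;>
    rcases h2 l with rfl | rfl <;> rcases h2 m with rfl | rfl <;> rcases h2 n with rfl | rfl <;>
    · simp only [emb12, emb13, emb23, Matrix.mul_apply, Fintype.sum_prod_type,
        Fin.sum_univ_two, hRm]
      norm_num [Prod.ext_iff]
      try ring

set_option maxHeartbeats 0 in
/-- The fundamental representation `F = I + ξ (H ⊗ E)` of the Jordanian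
twist is invertible with inverse `I - ξ (H ⊗ E)`, and `R = F₂₁ F⁻¹` satisfies the
quantum Yang–Baxter equation. -/
theorem jordanian_twist_matrix {R : Type*} [CommRing R] [Invertible (2 : R)] (ξ : R) :
    let H : Matrix (Fin 2) (Fin 2) R := (⅟(2 : R)) • !![1, 0; 0, -1]
    let E : Matrix (Fin 2) (Fin 2) R := !![0, 1; 0, 0]
    let F : Matrix (Fin 2 × Fin 2) (Fin 2 × Fin 2) R := 1 + ξ • (H ⊗ₖ E)
    let F21 : Matrix (Fin 2 × Fin 2) (Fin 2 × Fin 2) R := 1 + ξ • (E ⊗ₖ H)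
    IsUnit F ∧ F⁻¹ = 1 - ξ • (H ⊗ₖ E) ∧
      (let Rm := F21 * F⁻¹
       emb12 Rm * emb13 Rm * emb23 Rm = emb23 Rm * emb13 Rm * emb12 Rm) := by
  intro H E F F21
  have h2 : ∀ x : Fin 2, x = 0 ∨ x = 1 := by decide
  have hinv : F * (1 - ξ • (H ⊗ₖ E)) = 1 := by
    ext ⟨i, j⟩ ⟨k, l⟩
    rcases h2 i with rfl | rfl <;> rcases h2 j with rfl | rfl <;>
      rcases h2 k with rfl | rfl <;> rcases h2 l with rfl | rfl <;>
      · simp [F, H, E, Matrix.mul_apply, Fintype.sum_prod_type, Fin.sum_univ_two,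
          Matrix.one_apply, Prod.ext_iff]
        try ring
  have hinv' : (1 - ξ • (H ⊗ₖ E)) * F = 1 := by
    ext ⟨i, j⟩ ⟨k, l⟩
    rcases h2 i with rfl | rfl <;> rcases h2 j with rfl | rfl <;>
      rcases h2 k with rfl | rfl <;> rcases h2 l with rfl | rfl <;>
      · simp [F, H, E, Matrix.mul_apply, Fintype.sum_prod_type, Fin.sum_univ_two,
          Matrix.one_apply, Prod.ext_iff]
        try ring
  have hF : F⁻¹ = 1 - ξ • (H ⊗ₖ E) := Matrix.inv_eq_right_inv hinv
  refine ⟨⟨⟨F, 1 - ξ • (H ⊗ₖ E), hinv, hinv'⟩, rfl⟩, hF, ?_⟩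
  intro Rm
  have hRmF : Rm = F21 * (1 - ξ • (H ⊗ₖ E)) := by
    show F21 * F⁻¹ = _
    rw [hF]
  refine jordanian_aux (ξ * ⅟(2 : R)) Rm ?_
  intro p q
  rw [hRmF]
  obtain ⟨i, j⟩ := p; obtain ⟨k, l⟩ := q
  rcases h2 i with rfl | rfl <;> rcases h2 j with rfl | rfl <;>
    rcases h2 k with rfl | rfl <;> rcases h2 l with rfl | rfl <;>
    · simp [F21, H, E, Matrix.mul_apply, Fintype.sum_prod_type, Fin.sum_univ_two,
        Matrix.one_apply, Prod.ext_iff]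
      try ring
end

section
/- Let A be a bialgebra over a commutative ring and F an invertible element of A ⊗ A satisfying the twist equation F₁₂ · (Δ ⊗ id)(F) = F₂₃ · (id ⊗ Δ)(F) and the counit conditions (ε ⊗ id)(F) = 1 and (id ⊗ ε)(F) = 1. Then the twisted coproduct Δ_F(a) = F · Δ(a) · F⁻¹ is coassociative and counital: (Δ_F ⊗ id) ∘ Δ_F = (id ⊗ Δ_F) ∘ Δ_F and (ε ⊗ id) ∘ Δ_F = id = (id ⊗ ε) ∘ Δ_F. -/
/-!
Conjugation by `F` is multiplicative, and `Δ ⊗ id`, `id ⊗ Δ`, `ε ⊗ id`, `id ⊗ ε` and the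
associator are algebra maps. Hence both sides of the coassociativity identity are conjugates
of `(Δ ⊗ id) Δ a = (id ⊗ Δ) Δ a`, by `F₁₂ (Δ ⊗ id)(F)` on the left and by `F₂₃ (id ⊗ Δ)(F)`
on the right; the twist equation says these conjugating elements agree, hence so do their
inverses.
Applying `ε ⊗ id` kills `F` and `F⁻¹`, leaving `(ε ⊗ id) Δ a = a`.
-/

open TensorProduct

theorem map_mul_mul_of_map_eq_one {M N G : Type*} [Monoid M] [Monoid N] [FunLike G M N]
    [MonoidHomClass G M N]
    (f : G) {u u' : M} (h : u * u' = 1) (hu : f u = 1) (x : M) : f (u * x * u') = f x := by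
  have hu' : f u' = 1 := by simpa [hu] using map_mul_eq_one f h
  rw [map_mul, map_mul, hu, hu', one_mul, mul_one]

section ConjugateTensor

variable {R M A B : Type*} [CommSemiring R] [AddCommMonoid M] [Module R M]
  [Semiring A] [Semiring B] [Algebra R A] [Algebra R B]

theorem rTensor_mulLeft_comp_mulRight_comp_apply (a a' : A) (f : M →ₗ[R] A) (x : M ⊗[R] B) :
    (LinearMap.mulLeft R a ∘ₗ LinearMap.mulRight R a' ∘ₗ f).rTensor B x
      = (a ⊗ₜ 1) * f.rTensor B x * (a' ⊗ₜ 1) := by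
  induction x using TensorProduct.induction_on with
  | zero => simp
  | tmul m b => simp [Algebra.TensorProduct.tmul_mul_tmul, mul_assoc]
  | add x y hx hy => simp [hx, hy, mul_add, add_mul]

theorem lTensor_mulLeft_comp_mulRight_comp_apply (b b' : B) (f : M →ₗ[R] B) (x : A ⊗[R] M) :
    (LinearMap.mulLeft R b ∘ₗ LinearMap.mulRight R b' ∘ₗ f).lTensor A x
      = (1 ⊗ₜ b) * f.lTensor A x * (1 ⊗ₜ b') := by
  induction x using TensorProduct.induction_on with
  | zero => simp
  | tmul a m => simp [Algebra.TensorProduct.tmul_mul_tmul, mul_assoc]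
  | add x y hx hy => simp [hx, hy, mul_add, add_mul]

end ConjugateTensor

namespace Bialgebra

variable {R A : Type*} [CommSemiring R] [Semiring A] [Bialgebra R A]

def twistedComul (F Finv : A ⊗[R] A) : A →ₗ[R] A ⊗[R] A :=
  LinearMap.mulLeft R F ∘ₗ LinearMap.mulRight R Finv ∘ₗ Coalgebra.comul

variable {F Finv : A ⊗[R] A}

theorem twistedComul_apply (a : A) :
    twistedComul F Finv a = F * Coalgebra.comul a * Finv := by
  simp [twistedComul, mul_assoc]

theorem rTensor_twistedComul_apply (x : A ⊗[R] A) :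
    (twistedComul F Finv).rTensor A x
      = (F ⊗ₜ 1) * Algebra.TensorProduct.map (comulAlgHom R A) (AlgHom.id R A) x
          * (Finv ⊗ₜ 1) :=
  rTensor_mulLeft_comp_mulRight_comp_apply F Finv _ x

theorem lTensor_twistedComul_apply (x : A ⊗[R] A) :
    (twistedComul F Finv).lTensor A x
      = (1 ⊗ₜ F) * Algebra.TensorProduct.map (AlgHom.id R A) (comulAlgHom R A) x
          * (1 ⊗ₜ Finv) :=
  lTensor_mulLeft_comp_mulRight_comp_apply F Finv _ x

theorem twistedComul_coassoc_apply (hinv1 : F * Finv = 1) (hinv2 : Finv * F = 1)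
    (htwist : Algebra.TensorProduct.assoc R R R A A A (F ⊗ₜ 1)
        * Algebra.TensorProduct.assoc R R R A A A
            (Algebra.TensorProduct.map (comulAlgHom R A) (AlgHom.id R A) F)
      = (1 ⊗ₜ F) * Algebra.TensorProduct.map (AlgHom.id R A) (comulAlgHom R A) F) (a : A) :
    _root_.TensorProduct.assoc R A A A ((twistedComul F Finv).rTensor A (twistedComul F Finv a))
      = (twistedComul F Finv).lTensor A (twistedComul F Finv a) := by
  set α := Algebra.TensorProduct.assoc R R R A A A
  set Δ₁ := Algebra.TensorProduct.map (comulAlgHom R A) (AlgHom.id R A)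
  set Δ₂ := Algebra.TensorProduct.map (AlgHom.id R A) (comulAlgHom R A)
  have hcoassoc : α (Δ₁ (Coalgebra.comul a)) = Δ₂ (Coalgebra.comul a) :=
    Coalgebra.coassoc_apply a
  have hleft : (α (Δ₁ Finv) * α (Finv ⊗ₜ 1)) * (α (F ⊗ₜ 1) * α (Δ₁ F)) = 1 := by
    have h₁₂ : Finv ⊗ₜ[R] (1 : A) * F ⊗ₜ[R] 1 = 1 := by
      rw [Algebra.TensorProduct.tmul_mul_tmul, hinv2, one_mul]; rfl
    have : Δ₁ Finv * (Finv ⊗ₜ 1) * ((F ⊗ₜ 1) * Δ₁ F) = 1 := by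
      rw [mul_assoc, ← mul_assoc (Finv ⊗ₜ 1), h₁₂, one_mul, ← map_mul, hinv2, map_one]
    simpa only [map_mul, map_one] using congrArg α this
  have hright : ((1 ⊗ₜ F) * Δ₂ F) * (Δ₂ Finv * (1 ⊗ₜ Finv)) = 1 := by
    rw [mul_assoc, ← mul_assoc (Δ₂ F), ← map_mul, hinv1, map_one, one_mul,
      Algebra.TensorProduct.tmul_mul_tmul, hinv1, one_mul]; rfl
  have hinv : α (Δ₁ Finv) * α (Finv ⊗ₜ 1) = Δ₂ Finv * (1 ⊗ₜ Finv) :=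
    left_inv_eq_right_inv hleft (htwist ▸ hright)
  change α _ = _
  rw [rTensor_twistedComul_apply, lTensor_twistedComul_apply, twistedComul_apply]
  calc α ((F ⊗ₜ 1) * Δ₁ (F * Coalgebra.comul a * Finv) * (Finv ⊗ₜ 1))
      = (α (F ⊗ₜ 1) * α (Δ₁ F)) * α (Δ₁ (Coalgebra.comul a))
          * (α (Δ₁ Finv) * α (Finv ⊗ₜ 1)) := by simp only [map_mul, mul_assoc]
    _ = ((1 ⊗ₜ F) * Δ₂ F) * Δ₂ (Coalgebra.comul a) * (Δ₂ Finv * (1 ⊗ₜ Finv)) := by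
      rw [htwist, hcoassoc, hinv]
    _ = (1 ⊗ₜ F) * Δ₂ (F * Coalgebra.comul a * Finv) * (1 ⊗ₜ Finv) := by
      simp only [map_mul, mul_assoc]

theorem twistedComul_counit_left (hinv1 : F * Finv = 1)
    (hF : _root_.TensorProduct.lid R A (Coalgebra.counit.rTensor A F) = 1) (a : A) :
    _root_.TensorProduct.lid R A (Coalgebra.counit.rTensor A (twistedComul F Finv a)) = a := by
  let ε₁ := (Algebra.TensorProduct.lid R A).toAlgHom.comp
    (Algebra.TensorProduct.map (counitAlgHom R A) (AlgHom.id R A))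
  change ε₁ F = 1 at hF
  change ε₁ _ = a
  rw [twistedComul_apply, map_mul_mul_of_map_eq_one ε₁ hinv1 hF]
  exact (congrArg (_root_.TensorProduct.lid R A) (Coalgebra.rTensor_counit_comul a)).trans
    (one_smul R a)

theorem twistedComul_counit_right (hinv1 : F * Finv = 1)
    (hF : _root_.TensorProduct.rid R A (Coalgebra.counit.lTensor A F) = 1) (a : A) :
    _root_.TensorProduct.rid R A (Coalgebra.counit.lTensor A (twistedComul F Finv a)) = a := by
  let ε₂ := (Algebra.TensorProduct.rid R R A).toAlgHom.comp
    (Algebra.TensorProduct.map (AlgHom.id R A) (counitAlgHom R A))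
  change ε₂ F = 1 at hF
  change ε₂ _ = a
  rw [twistedComul_apply, map_mul_mul_of_map_eq_one ε₂ hinv1 hF]
  exact (congrArg (_root_.TensorProduct.rid R A) (Coalgebra.lTensor_counit_comul a)).trans
    (one_smul R a)

end Bialgebra

/-- If `F` is an invertible element of `A ⊗ A` satisfying the Drinfeld
twist equation `F₁₂ (Δ ⊗ id)(F) = F₂₃ (id ⊗ Δ)(F)` and the counit conditions, then
the twisted coproduct `Δ_F(a) = F Δ(a) F⁻¹` is coassociative and counital. -/
theorem twisted_coproduct_coassoc {R A : Type*} [CommRing R] [Ring A] [Bialgebra R A]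
    (F Finv : A ⊗[R] A) (hinv1 : F * Finv = 1) (hinv2 : Finv * F = 1)
    (hcounitL : (TensorProduct.lid R A)
      ((LinearMap.rTensor A (Coalgebra.counit (R := R) (A := A))) F) = 1)
    (hcounitR : (TensorProduct.rid R A)
      ((LinearMap.lTensor A (Coalgebra.counit (R := R) (A := A))) F) = 1)
    (htwist :
      (Algebra.TensorProduct.assoc R R R A A A)
          ((Algebra.TensorProduct.includeLeft :
              (A ⊗[R] A) →ₐ[R] (A ⊗[R] A) ⊗[R] A) F)
        * ((Algebra.TensorProduct.assoc R R R A A A).toAlgHom.comp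
            (Algebra.TensorProduct.map (Bialgebra.comulAlgHom R A) (AlgHom.id R A))) F
      = ((Algebra.TensorProduct.includeRight :
              (A ⊗[R] A) →ₐ[R] A ⊗[R] (A ⊗[R] A)) F)
        * (Algebra.TensorProduct.map (AlgHom.id R A) (Bialgebra.comulAlgHom R A)) F) :
    let ΔF : A →ₗ[R] A ⊗[R] A :=
      (LinearMap.mulLeft R F) ∘ₗ (LinearMap.mulRight R Finv) ∘ₗ
        (Coalgebra.comul (R := R) (A := A))
    (∀ a : A,
      (TensorProduct.assoc R A A A) ((TensorProduct.map ΔF LinearMap.id) (ΔF a))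
        = (TensorProduct.map LinearMap.id ΔF) (ΔF a)) ∧
    (∀ a : A,
      (TensorProduct.lid R A)
          ((LinearMap.rTensor A (Coalgebra.counit (R := R) (A := A))) (ΔF a)) = a) ∧
    (∀ a : A,
      (TensorProduct.rid R A)
          ((LinearMap.lTensor A (Coalgebra.counit (R := R) (A := A))) (ΔF a)) = a) := by
  intro ΔF
  exact ⟨Bialgebra.twistedComul_coassoc_apply hinv1 hinv2 htwist,
    Bialgebra.twistedComul_counit_left hinv1 hcounitL,
    Bialgebra.twistedComul_counit_right hinv1 hcounitR⟩
end

section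
/- Let A be a bialgebra and F an invertible element of A ⊗ A satisfying the factorized twist equations (Δ ⊗ id)(F) = F₁₃ F₂₃ and (id ⊗ Δ_F)(F) = F₁₂ F₁₃, where Δ_F(a) = F Δ(a) F⁻¹. Then F satisfies the general twist equation F₁₂ · (Δ ⊗ id)(F) = F₂₃ · (id ⊗ Δ)(F). -/
open TensorProduct

theorem mul_eq_mul_of_factorized {M : Type*} [Monoid M] {f₁₂ f₁₃ f₂₃ f₂₃' d₁ d₂ : M}
    (hinv : f₂₃' * f₂₃ = 1) (h₁ : d₁ = f₁₃ * f₂₃) (h₂ : f₂₃ * d₂ * f₂₃' = f₁₂ * f₁₃) :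
    f₁₂ * d₁ = f₂₃ * d₂ :=
  calc f₁₂ * d₁ = f₁₂ * f₁₃ * f₂₃ := by rw [h₁, mul_assoc]
    _ = f₂₃ * d₂ * f₂₃' * f₂₃ := by rw [h₂]
    _ = f₂₃ * d₂ := by rw [mul_assoc, hinv, mul_one]

theorem factorized_twist_implies_twist_general {R A : Type*} [CommRing R] [Ring A] [Bialgebra R A]
    (F Finv : A ⊗[R] A) (hinv2 : Finv * F = 1) :
    let D1 : A ⊗[R] A →ₐ[R] A ⊗[R] (A ⊗[R] A) :=
      (Algebra.TensorProduct.assoc R R R A A A).toAlgHom.comp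
        (Algebra.TensorProduct.map (Bialgebra.comulAlgHom R A) (AlgHom.id R A))
    let D2 : A ⊗[R] A →ₐ[R] A ⊗[R] (A ⊗[R] A) :=
      Algebra.TensorProduct.map (AlgHom.id R A) (Bialgebra.comulAlgHom R A)
    let F12 := (Algebra.TensorProduct.map (AlgHom.id R A)
      (Algebra.TensorProduct.includeLeft : A →ₐ[R] A ⊗[R] A)) F
    let F13 := (Algebra.TensorProduct.map (AlgHom.id R A)
      (Algebra.TensorProduct.includeRight : A →ₐ[R] A ⊗[R] A)) F
    let F23 := (Algebra.TensorProduct.includeRight :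
      (A ⊗[R] A) →ₐ[R] A ⊗[R] (A ⊗[R] A)) F
    let F23inv := (Algebra.TensorProduct.includeRight :
      (A ⊗[R] A) →ₐ[R] A ⊗[R] (A ⊗[R] A)) Finv
    D1 F = F13 * F23 →
    F23 * D2 F * F23inv = F12 * F13 →
    F12 * D1 F = F23 * D2 F := by
  intro D1 D2 F12 F13 F23 F23inv h₁ h₂
  have hinv : F23inv * F23 = 1 := by
    rw [← map_mul, hinv2, map_one]
  exact mul_eq_mul_of_factorized hinv h₁ h₂

/-- A factorizable twist, i.e. an invertible `F ∈ A ⊗ A` satisfying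
`(Δ ⊗ id)(F) = F₁₃ F₂₃` and `(id ⊗ Δ_F)(F) = F₁₂ F₁₃` (where
`(id ⊗ Δ_F)(F) = F₂₃ (id ⊗ Δ)(F) F₂₃⁻¹`), satisfies the Drinfeld twist equation
`F₁₂ (Δ ⊗ id)(F) = F₂₃ (id ⊗ Δ)(F)`. -/
theorem factorized_twist_implies_twist {R A : Type*} [CommRing R] [Ring A] [Bialgebra R A]
    (F Finv : A ⊗[R] A) (hinv1 : F * Finv = 1) (hinv2 : Finv * F = 1) :
    let D1 : A ⊗[R] A →ₐ[R] A ⊗[R] (A ⊗[R] A) :=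
      (Algebra.TensorProduct.assoc R R R A A A).toAlgHom.comp
        (Algebra.TensorProduct.map (Bialgebra.comulAlgHom R A) (AlgHom.id R A))
    let D2 : A ⊗[R] A →ₐ[R] A ⊗[R] (A ⊗[R] A) :=
      Algebra.TensorProduct.map (AlgHom.id R A) (Bialgebra.comulAlgHom R A)
    let F12 := (Algebra.TensorProduct.map (AlgHom.id R A)
      (Algebra.TensorProduct.includeLeft : A →ₐ[R] A ⊗[R] A)) F
    let F13 := (Algebra.TensorProduct.map (AlgHom.id R A)
      (Algebra.TensorProduct.includeRight : A →ₐ[R] A ⊗[R] A)) F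
    let F23 := (Algebra.TensorProduct.includeRight :
      (A ⊗[R] A) →ₐ[R] A ⊗[R] (A ⊗[R] A)) F
    let F23inv := (Algebra.TensorProduct.includeRight :
      (A ⊗[R] A) →ₐ[R] A ⊗[R] (A ⊗[R] A)) Finv
    D1 F = F13 * F23 →
    F23 * D2 F * F23inv = F12 * F13 →
    F12 * D1 F = F23 * D2 F :=
  factorized_twist_implies_twist_general F Finv hinv2
end
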